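/- Let M ≥ 1, let g : ZMod M → ℂ be nowhere vanishing, let q, p ∈ ZMod M and t ∈ {0,1,2}, and let g_{qpt} be the associated auxiliary window. Then for every x : ZMod M → ℂ and every (k,ℓ) ∈ ZMod M × ZMod M, one has ⟨x, π(k,ℓ) g_{qpt}⟩ = ⟨x, π(k,ℓ) g⟩ + e^{−2πit/3} · e^{2πikp/M} · ⟨x, π(k+q, ℓ+p) g⟩. -/

import Mathlib

open scoped BigOperators

/-- `e^{2πi a/M}` for `a : ZMod M`. -/
noncomputable def eM (M : ℕ) (a : ZMod M) : ℂ :=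
  Complex.exp (2 * Real.pi * Complex.I * (a.val : ℂ) / (M : ℂ))

/-- Time-frequency shift `π(k,ℓ) g (m) = e^{2πi ℓ m / M} g(m-k)`. -/
noncomputable def tf (M : ℕ) (kl : ZMod M × ZMod M) (g : ZMod M → ℂ) : ZMod M → ℂ :=
  fun m => eM M (kl.2 * m) * g (m - kl.1)

/-- Inner product on `ℂ^M = (ZMod M → ℂ)`. -/
noncomputable def inn (M : ℕ) [NeZero M] (x y : ZMod M → ℂ) : ℂ :=
  ∑ m : ZMod M, x m * (starRingEnd ℂ) (y m)

/-- Auxiliary window `g_{qpt}(m) = g(m) (1 + e^{2πi(mp/M + t/3)} g(m-q)/g(m))`. -/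
noncomputable def gAux (M : ℕ) (g : ZMod M → ℂ) (q p : ZMod M) (t : Fin 3) : ZMod M → ℂ :=
  fun m => g m *
    (1 + eM M (m * p) * Complex.exp (2 * Real.pi * Complex.I * ((t : ℕ) : ℂ) / 3) *
      g (m - q) / g m)

/-
Cancelling `g(m)` in the definition gives `g_{qpt} = g + e^{2πit/3} · π(q,p) g`. Since the
exponentials form an additive character of `ZMod M`, time–frequency shifts compose up to a phase,
`π(k,ℓ) π(q,p) = e^{-2πikp/M} π(k+q, ℓ+p)`; the inner product, conjugate-linear in its second
argument, then conjugates the scalar `e^{2πit/3} e^{-2πikp/M}`.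
-/

open ComplexConjugate

section Character

variable {M : ℕ} [NeZero M]

theorem eM_eq_stdAddChar (a : ZMod M) : eM M a = ZMod.stdAddChar a := by
  rw [ZMod.stdAddChar_apply, ZMod.toCircle_apply, eM]

theorem eM_add (a b : ZMod M) : eM M (a + b) = eM M a * eM M b := by
  simp only [eM_eq_stdAddChar, AddChar.map_add_eq_mul]

theorem conj_eM (a : ZMod M) : conj (eM M a) = eM M (-a) := by
  simp only [eM_eq_stdAddChar, AddChar.map_neg_eq_conj]

end Character

theorem conj_exp_two_pi_I_mul_natCast_div (a b : ℕ) :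
    conj (Complex.exp (2 * Real.pi * Complex.I * a / b)) =
      Complex.exp (-(2 * Real.pi * Complex.I * a / b)) := by
  rw [← Complex.exp_conj]
  simp only [map_div₀, map_mul, map_ofNat, Complex.conj_ofReal, Complex.conj_I,
    Complex.conj_natCast]
  ring_nf

section InnerProduct

variable {M : ℕ} [NeZero M]

theorem inn_add_right (x y z : ZMod M → ℂ) : inn M x (y + z) = inn M x y + inn M x z := by
  simp only [inn, Pi.add_apply, map_add, mul_add, Finset.sum_add_distrib]

theorem inn_smul_right (x y : ZMod M → ℂ) (c : ℂ) : inn M x (c • y) = conj c * inn M x y := by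
  simp only [inn, Pi.smul_apply, smul_eq_mul, map_mul, Finset.mul_sum]
  exact Finset.sum_congr rfl fun m _ => by ring

end InnerProduct

section TimeFrequencyShift

variable {M : ℕ}

theorem tf_add (kl : ZMod M × ZMod M) (g h : ZMod M → ℂ) :
    tf M kl (g + h) = tf M kl g + tf M kl h := by
  funext m
  simp only [tf, Pi.add_apply, mul_add]

theorem tf_smul (kl : ZMod M × ZMod M) (c : ℂ) (g : ZMod M → ℂ) :
    tf M kl (c • g) = c • tf M kl g := by
  funext m
  simp only [tf, Pi.smul_apply, smul_eq_mul]
  ring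

theorem tf_tf [NeZero M] (k ℓ q p : ZMod M) (g : ZMod M → ℂ) :
    tf M (k, ℓ) (tf M (q, p) g) = eM M (-(k * p)) • tf M (k + q, ℓ + p) g := by
  funext m
  simp only [tf, Pi.smul_apply, smul_eq_mul, sub_sub, ← mul_assoc, ← eM_add]
  congr 2
  ring

theorem gAux_eq_add_smul_tf {g : ZMod M → ℂ} (hg : ∀ m, g m ≠ 0) (q p : ZMod M) (t : Fin 3) :
    gAux M g q p t =
      g + Complex.exp (2 * Real.pi * Complex.I * ((t : ℕ) : ℂ) / 3) • tf M (q, p) g := by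
  funext m
  rw [gAux, mul_add, mul_one, mul_div_cancel₀ _ (hg m)]
  simp only [tf, Pi.add_apply, Pi.smul_apply, smul_eq_mul, mul_comm p m]
  ring

end TimeFrequencyShift

theorem stmt0 (M : ℕ) [NeZero M] (g : ZMod M → ℂ) (hg : ∀ m, g m ≠ 0)
    (q p : ZMod M) (t : Fin 3) (x : ZMod M → ℂ) (k ℓ : ZMod M) :
    inn M x (tf M (k, ℓ) (gAux M g q p t)) =
      inn M x (tf M (k, ℓ) g) +
        Complex.exp (-(2 * Real.pi * Complex.I * ((t : ℕ) : ℂ) / 3)) * eM M (k * p) *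
          inn M x (tf M (k + q, ℓ + p) g) := by
  have hconj := conj_exp_two_pi_I_mul_natCast_div t 3
  rw [Nat.cast_ofNat] at hconj
  rw [gAux_eq_add_smul_tf hg, tf_add, tf_smul, tf_tf, smul_smul, inn_add_right, inn_smul_right,
    map_mul, conj_eM, neg_neg, hconj]
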